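/- If τ : A ⊗ H → K is a skew pairing between Hopf quasigroups A and H, then τ is convolution invertible with inverse τ⁻¹ = τ ∘ (λ_A ⊗ H), and moreover τ = τ⁻¹ ∘ (A ⊗ λ_H). -/

import Mathlib

open TensorProduct

noncomputable section

/-- A Hopf quasigroup over a commutative ring `R` (Klim–Majid), given by a unital magma
and comonoid structure on `H` whose counit and comultiplication are unital magma morphisms,
together with an antipode satisfying the four Hopf quasigroup identities. -/
structure HopfQuasigroup (R : Type*) [CommRing R] (H : Type*) [AddCommGroup H] [Module R H] :
    Type _ where
  mul : H ⊗[R] H →ₗ[R] H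
  unit : H
  counit : H →ₗ[R] R
  comul : H →ₗ[R] H ⊗[R] H
  antipode : H →ₗ[R] H
  mul_unit_left : ∀ h : H, mul (unit ⊗ₜ[R] h) = h
  mul_unit_right : ∀ h : H, mul (h ⊗ₜ[R] unit) = h
  coassoc : (TensorProduct.assoc R H H H).toLinearMap ∘ₗ comul.rTensor H ∘ₗ comul
      = comul.lTensor H ∘ₗ comul
  counit_left : (TensorProduct.lid R H).toLinearMap ∘ₗ counit.rTensor H ∘ₗ comul = LinearMap.id
  counit_right : (TensorProduct.rid R H).toLinearMap ∘ₗ counit.lTensor H ∘ₗ comul = LinearMap.id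
  counit_unit : counit unit = 1
  counit_mul : counit ∘ₗ mul
      = (TensorProduct.lid R R).toLinearMap ∘ₗ TensorProduct.map counit counit
  comul_unit : comul unit = unit ⊗ₜ[R] unit
  comul_mul : comul ∘ₗ mul = TensorProduct.map mul mul
      ∘ₗ (TensorProduct.tensorTensorTensorComm R H H H H).toLinearMap
      ∘ₗ TensorProduct.map comul comul
  antipode_lH₁ : mul ∘ₗ TensorProduct.map antipode mul
      ∘ₗ (TensorProduct.assoc R H H H).toLinearMap ∘ₗ comul.rTensor H
      = (TensorProduct.lid R H).toLinearMap ∘ₗ counit.rTensor H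
  antipode_lH₂ : mul ∘ₗ mul.lTensor H ∘ₗ (antipode.rTensor H).lTensor H
      ∘ₗ (TensorProduct.assoc R H H H).toLinearMap ∘ₗ comul.rTensor H
      = (TensorProduct.lid R H).toLinearMap ∘ₗ counit.rTensor H
  antipode_rH₁ : mul ∘ₗ mul.rTensor H ∘ₗ (TensorProduct.assoc R H H H).symm.toLinearMap
      ∘ₗ (antipode.rTensor H).lTensor H ∘ₗ comul.lTensor H
      = (TensorProduct.rid R H).toLinearMap ∘ₗ counit.lTensor H
  antipode_rH₂ : mul ∘ₗ TensorProduct.map mul antipode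
      ∘ₗ (TensorProduct.assoc R H H H).symm.toLinearMap ∘ₗ comul.lTensor H
      = (TensorProduct.rid R H).toLinearMap ∘ₗ counit.lTensor H

section SkewPairing

variable {R : Type*} [CommRing R] {A H : Type*}
  [AddCommGroup A] [Module R A] [AddCommGroup H] [Module R H]

/-- The tensor product comonoid comultiplication on `A ⊗ H`. -/
def comulT (hA : HopfQuasigroup R A) (hH : HopfQuasigroup R H) :
    A ⊗[R] H →ₗ[R] (A ⊗[R] H) ⊗[R] (A ⊗[R] H) :=
  (TensorProduct.tensorTensorTensorComm R A A H H).toLinearMap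
    ∘ₗ TensorProduct.map hA.comul hH.comul

/-- The tensor product comonoid counit on `A ⊗ H`. -/
def counitT (hA : HopfQuasigroup R A) (hH : HopfQuasigroup R H) : A ⊗[R] H →ₗ[R] R :=
  (TensorProduct.lid R R).toLinearMap ∘ₗ TensorProduct.map hA.counit hH.counit

/-- Convolution product of morphisms `A ⊗ H → R` with respect to the tensor product
comonoid structure. -/
def conv (hA : HopfQuasigroup R A) (hH : HopfQuasigroup R H)
    (f g : A ⊗[R] H →ₗ[R] R) : A ⊗[R] H →ₗ[R] R :=
  (TensorProduct.lid R R).toLinearMap ∘ₗ TensorProduct.map f g ∘ₗ comulT hA hH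

/-- `τ : A ⊗ H → R` is a skew pairing between the Hopf quasigroups `A` and `H`. -/
def IsSkewPairing (hA : HopfQuasigroup R A) (hH : HopfQuasigroup R H)
    (τ : A ⊗[R] H →ₗ[R] R) : Prop :=
  (τ ∘ₗ hA.mul.rTensor H
      = (TensorProduct.lid R R).toLinearMap ∘ₗ TensorProduct.map τ τ
        ∘ₗ (TensorProduct.tensorTensorTensorComm R A A H H).toLinearMap
        ∘ₗ hH.comul.lTensor (A ⊗[R] A)) ∧
  (τ ∘ₗ hH.mul.lTensor A
      = (TensorProduct.lid R R).toLinearMap ∘ₗ TensorProduct.map τ τ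
        ∘ₗ (TensorProduct.tensorTensorTensorComm R A A H H).toLinearMap
        ∘ₗ (((TensorProduct.comm R A A).toLinearMap ∘ₗ hA.comul).rTensor (H ⊗[R] H))) ∧
  (∀ a : A, τ (a ⊗ₜ[R] hH.unit) = hA.counit a) ∧
  (∀ h : H, τ (hA.unit ⊗ₜ[R] h) = hH.counit h)

end SkewPairing

/-!
The identities `τ * τ⁻¹ = ε = τ⁻¹ * τ` come from the first skew-pairing axiom, which turns
`Σ τ(a₁ ⊗ h₁) τ(λa₂ ⊗ h₂)` into `τ(a₁ λ(a₂) ⊗ h)`, and similarly for `λ(a₁) a₂`. For the last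
identity let `σ = τ ∘ (λ ⊗ λ)`: the second axiom together with the anti-comultiplicativity
`Δ(λa) = λa₂ ⊗ λa₁` gives `τ⁻¹ * σ = ε`, so `τ = σ` because a left and a right inverse in the
convolution monoid agree.

Anti-comultiplicativity holds in every Hopf quasigroup, even though convolution of maps
`H → H ⊗ H` is not associative: with `G h = λh₂ ⊗ λh₁`, the quasigroup identity of `H ⊗ H` gives
`((Δ ∘ λ) * Δ) * G = Δ ∘ λ`, while `(Δ ∘ λ) * Δ = Δ ∘ (λ * id) = (1 ⊗ 1) ε`, hence `Δ ∘ λ = G`.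
-/

open LinearMap (toSpanSingleton)

namespace HopfQuasigroup

variable {R : Type*} [CommRing R] {H : Type*} [AddCommGroup H] [Module R H]
  (hq : HopfQuasigroup R H)

/-- Gives access to Mathlib's coalgebra API: `coassoc_simps` and the convolution monoid. -/
abbrev toCoalgebra : Coalgebra R H where
  comul := hq.comul
  counit := hq.counit
  coassoc := hq.coassoc
  rTensor_counit_comp_comul := by
    ext h
    apply (TensorProduct.lid R H).injective
    simpa using LinearMap.congr_fun hq.counit_left h
  lTensor_counit_comp_comul := by
    ext h
    apply (TensorProduct.rid R H).injective
    simpa using LinearMap.congr_fun hq.counit_right h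

lemma toCoalgebra_comul : hq.toCoalgebra.comul = hq.comul := rfl

lemma toCoalgebra_counit : hq.toCoalgebra.counit = hq.counit := rfl

lemma mul_antipode_rTensor_comul :
    hq.mul ∘ₗ hq.antipode.rTensor H ∘ₗ hq.comul = toSpanSingleton R H hq.unit ∘ₗ hq.counit := by
  ext h
  have key (t : H ⊗[R] H) : hq.mul (map hq.antipode hq.mul
      (TensorProduct.assoc R H H H (t ⊗ₜ hq.unit))) = hq.mul (hq.antipode.rTensor H t) := by
    induction t using TensorProduct.induction_on with
    | zero => simp
    | tmul x y => simp [hq.mul_unit_right]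
    | add s t hs ht => simp only [add_tmul, map_add, hs, ht]
  simpa [key] using LinearMap.congr_fun hq.antipode_lH₁ (h ⊗ₜ hq.unit)

lemma mul_map_lmul_antipode_comul (a : H) :
    hq.mul ∘ₗ map (hq.mul ∘ₗ TensorProduct.mk R H H a) hq.antipode ∘ₗ hq.comul
      = toSpanSingleton R H a ∘ₗ hq.counit := by
  ext h
  have key (t : H ⊗[R] H) : hq.mul (map hq.mul hq.antipode
      ((TensorProduct.assoc R H H H).symm (a ⊗ₜ t)))
        = hq.mul (map (hq.mul ∘ₗ TensorProduct.mk R H H a) hq.antipode t) := by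
    induction t using TensorProduct.induction_on with
    | zero => simp
    | tmul x y => simp
    | add s t hs ht => simp only [tmul_add, map_add, hs, ht]
  simpa [key] using LinearMap.congr_fun hq.antipode_rH₂ (a ⊗ₜ h)

lemma mul_antipode_lTensor_comul :
    hq.mul ∘ₗ hq.antipode.lTensor H ∘ₗ hq.comul = toSpanSingleton R H hq.unit ∘ₗ hq.counit := by
  have hunit : hq.mul ∘ₗ TensorProduct.mk R H H hq.unit = LinearMap.id := by
    ext h
    exact hq.mul_unit_left h
  have h := hq.mul_map_lmul_antipode_comul hq.unit
  rwa [hunit] at h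

lemma counit_comp_antipode : hq.counit ∘ₗ hq.antipode = hq.counit := by
  let := hq.toCoalgebra
  calc hq.counit ∘ₗ hq.antipode
      = (TensorProduct.lid R R).toLinearMap ∘ₗ map (hq.counit ∘ₗ hq.antipode) hq.counit
          ∘ₗ hq.comul := by
        rw [← toCoalgebra_counit, ← toCoalgebra_comul, CoassocSimps.map_counit_comp_comul_right]
        ext; simp
    _ = hq.counit ∘ₗ hq.mul ∘ₗ hq.antipode.rTensor H ∘ₗ hq.comul := by
        rw [← LinearMap.comp_assoc _ hq.mul hq.counit, hq.counit_mul, LinearMap.comp_assoc,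
          ← LinearMap.comp_assoc _ _ (map _ _), LinearMap.map_comp_rTensor]
    _ = hq.counit := by
        rw [mul_antipode_rTensor_comul]
        ext; simp [hq.counit_unit]

def mulTensor : (H ⊗[R] H) ⊗[R] (H ⊗[R] H) →ₗ[R] H ⊗[R] H :=
  map hq.mul hq.mul ∘ₗ (TensorProduct.tensorTensorTensorComm R H H H H).toLinearMap

def convTensor (f g : H →ₗ[R] H ⊗[R] H) : H →ₗ[R] H ⊗[R] H :=
  hq.mulTensor ∘ₗ map f g ∘ₗ hq.comul

/-- In Sweedler notation, `((a ⊗ b) · (h₁ ⊗ h₂)) · (λh₄ ⊗ λh₃) = ε(h) (a ⊗ b)`. The components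
are `(a h₁) λh₄` and `(b h₂) λh₃`; `antipode_rH₂` collapses the inner pair `h₂, h₃`, and then the
outer pair `h₁, h₄`. -/
lemma mulTensor_tmul_mulTensor_antipode (a b : H) :
    hq.mulTensor ∘ₗ map (hq.mulTensor ∘ₗ TensorProduct.mk R _ _ (a ⊗ₜ b))
        ((TensorProduct.comm R H H).toLinearMap ∘ₗ map hq.antipode hq.antipode)
        ∘ₗ map hq.comul hq.comul ∘ₗ hq.comul
      = toSpanSingleton R _ (a ⊗ₜ b) ∘ₗ hq.counit := by
  let := hq.toCoalgebra
  let Γ (c : H) : H ⊗[R] H →ₗ[R] H :=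
    hq.mul ∘ₗ map (hq.mul ∘ₗ TensorProduct.mk R H H c) hq.antipode
  have hcoassoc : map hq.comul hq.comul ∘ₗ hq.comul
      = (TensorProduct.assoc R H H _).symm.toLinearMap ∘ₗ
        (TensorProduct.assoc R H H H).toLinearMap.lTensor H ∘ₗ
        (hq.comul.rTensor H).lTensor H ∘ₗ hq.comul.lTensor H ∘ₗ hq.comul := by
    simp only [← toCoalgebra_comul, coassoc_simps]
  have hshuffle : hq.mulTensor ∘ₗ map (hq.mulTensor ∘ₗ TensorProduct.mk R _ _ (a ⊗ₜ b))
        ((TensorProduct.comm R H H).toLinearMap ∘ₗ map hq.antipode hq.antipode) ∘ₗ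
        (TensorProduct.assoc R H H _).symm.toLinearMap ∘ₗ
        (TensorProduct.assoc R H H H).toLinearMap.lTensor H
      = map (Γ a) (Γ b) ∘ₗ (TensorProduct.assoc R H H _).symm.toLinearMap ∘ₗ
        (TensorProduct.comm R (H ⊗[R] H) H).toLinearMap.lTensor H := by
    ext x y z w
    simp [Γ, mulTensor]
  have hinner : map (Γ a) (Γ b) ∘ₗ (TensorProduct.assoc R H H _).symm.toLinearMap ∘ₗ
        (TensorProduct.comm R (H ⊗[R] H) H).toLinearMap.lTensor H ∘ₗ
        (hq.comul.rTensor H).lTensor H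
      = (TensorProduct.mk R H H).flip b ∘ₗ Γ a ∘ₗ
        ((TensorProduct.lid R H).toLinearMap ∘ₗ hq.counit.rTensor H).lTensor H := by
    ext x y z
    simpa [Γ, ← TensorProduct.smul_tmul'] using
      congr(Γ a (x ⊗ₜ z) ⊗ₜ[R] $(hq.mul_map_lmul_antipode_comul b) y)
  have hcounit : ((TensorProduct.lid R H).toLinearMap ∘ₗ hq.counit.rTensor H).lTensor H ∘ₗ
      hq.comul.lTensor H ∘ₗ hq.comul = hq.comul := by
    rw [← LinearMap.comp_assoc, ← LinearMap.lTensor_comp, LinearMap.comp_assoc, hq.counit_left,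
      LinearMap.lTensor_id, LinearMap.id_comp]
  calc _ = map (Γ a) (Γ b) ∘ₗ (TensorProduct.assoc R H H (H ⊗[R] H)).symm.toLinearMap ∘ₗ
          (TensorProduct.comm R (H ⊗[R] H) H).toLinearMap.lTensor H ∘ₗ
          (hq.comul.rTensor H).lTensor H ∘ₗ hq.comul.lTensor H ∘ₗ hq.comul := by
        rw [hcoassoc]
        simp only [← LinearMap.comp_assoc] at hshuffle ⊢
        rw [hshuffle]
    _ = (TensorProduct.mk R H H).flip b ∘ₗ Γ a ∘ₗ hq.comul := by
        simp only [← LinearMap.comp_assoc] at hinner ⊢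
        rw [hinner]
        simp only [LinearMap.comp_assoc, hcounit]
    _ = toSpanSingleton R _ (a ⊗ₜ b) ∘ₗ hq.counit := by
        rw [show Γ a ∘ₗ hq.comul = _ from hq.mul_map_lmul_antipode_comul a]
        ext; simp

lemma mulTensor_mulTensor_antipode (X : H ⊗[R] H) :
    hq.mulTensor ∘ₗ map (hq.mulTensor ∘ₗ TensorProduct.mk R _ _ X)
        ((TensorProduct.comm R H H).toLinearMap ∘ₗ map hq.antipode hq.antipode)
        ∘ₗ map hq.comul hq.comul ∘ₗ hq.comul
      = toSpanSingleton R _ X ∘ₗ hq.counit := by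
  induction X using TensorProduct.induction_on with
  | zero => ext; simp
  | add X Y hX hY =>
    ext h
    simpa [LinearMap.comp_add, TensorProduct.map_add_left] using congr($hX h + $hY h)
  | tmul a b => exact hq.mulTensor_tmul_mulTensor_antipode a b

lemma convTensor_convTensor_comul_antipode (f : H →ₗ[R] H ⊗[R] H) :
    hq.convTensor (hq.convTensor f hq.comul)
      ((TensorProduct.comm R H H).toLinearMap ∘ₗ map hq.antipode hq.antipode ∘ₗ hq.comul) = f := by
  let := hq.toCoalgebra
  let Ψ := hq.mulTensor ∘ₗ map hq.mulTensor
    ((TensorProduct.comm R H H).toLinearMap ∘ₗ map hq.antipode hq.antipode) ∘ₗ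
    (TensorProduct.assoc R _ _ _).symm.toLinearMap
  have hΨ (X : H ⊗[R] H) : Ψ ∘ₗ TensorProduct.mk R _ _ X = hq.mulTensor ∘ₗ
      map (hq.mulTensor ∘ₗ TensorProduct.mk R _ _ X)
        ((TensorProduct.comm R H H).toLinearMap ∘ₗ map hq.antipode hq.antipode) := by
    ext; rfl
  have hcancel : Ψ ∘ₗ map f (map hq.comul hq.comul ∘ₗ hq.comul)
      = (TensorProduct.rid R _).toLinearMap ∘ₗ map f hq.counit := by
    refine TensorProduct.ext' fun u v => ?_
    have h := hq.mulTensor_mulTensor_antipode (f u)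
    rw [← LinearMap.comp_assoc, ← hΨ] at h
    simpa using congr($h v)
  calc _ = Ψ ∘ₗ map f (map hq.comul hq.comul ∘ₗ hq.comul) ∘ₗ hq.comul := by
        simp only [Ψ, convTensor, ← toCoalgebra_comul, coassoc_simps]
    _ = f := by
        rw [← LinearMap.comp_assoc, hcancel, LinearMap.comp_assoc, ← toCoalgebra_comul,
          ← toCoalgebra_counit, CoassocSimps.map_counit_comp_comul_right]
        ext; simp

lemma comul_antipode_convTensor_comul :
    hq.convTensor (hq.comul ∘ₗ hq.antipode) hq.comul
      = toSpanSingleton R _ (hq.unit ⊗ₜ[R] hq.unit) ∘ₗ hq.counit := by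
  calc _ = (hq.comul ∘ₗ hq.mul) ∘ₗ hq.antipode.rTensor H ∘ₗ hq.comul := by
        rw [hq.comul_mul]
        simp only [convTensor, mulTensor, LinearMap.comp_assoc]
        rw [← LinearMap.comp_assoc _ (LinearMap.rTensor _ _), LinearMap.map_comp_rTensor]
    _ = _ := by
        rw [LinearMap.comp_assoc, mul_antipode_rTensor_comul]
        ext; simp [hq.comul_unit]

lemma unit_convTensor (g : H →ₗ[R] H ⊗[R] H) :
    hq.convTensor (toSpanSingleton R _ (hq.unit ⊗ₜ[R] hq.unit) ∘ₗ hq.counit) g = g := by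
  have hunit : hq.mulTensor ∘ₗ TensorProduct.mk R _ _ (hq.unit ⊗ₜ[R] hq.unit) = LinearMap.id := by
    ext; simp [mulTensor, hq.mul_unit_left]
  have hsplit : map (toSpanSingleton R _ (hq.unit ⊗ₜ[R] hq.unit) ∘ₗ hq.counit) g
      = TensorProduct.mk R _ _ (hq.unit ⊗ₜ[R] hq.unit) ∘ₗ g ∘ₗ
        (TensorProduct.lid R H).toLinearMap ∘ₗ hq.counit.rTensor H := by
    ext; simp [TensorProduct.smul_tmul']
  simp only [convTensor, hsplit, LinearMap.comp_assoc]
  rw [← LinearMap.comp_assoc _ (TensorProduct.mk R _ _ _) hq.mulTensor, hunit, hq.counit_left,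
    LinearMap.id_comp, LinearMap.comp_id]

lemma comul_comp_antipode :
    hq.comul ∘ₗ hq.antipode
      = (TensorProduct.comm R H H).toLinearMap ∘ₗ map hq.antipode hq.antipode ∘ₗ hq.comul := by
  calc _ = hq.convTensor (hq.convTensor (hq.comul ∘ₗ hq.antipode) hq.comul)
        ((TensorProduct.comm R H H).toLinearMap ∘ₗ map hq.antipode hq.antipode ∘ₗ hq.comul) :=
        (hq.convTensor_convTensor_comul_antipode _).symm
    _ = _ := by rw [comul_antipode_convTensor_comul, unit_convTensor]

end HopfQuasigroup

section SkewPairing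

variable {R : Type*} [CommRing R] {A H : Type*}
  [AddCommGroup A] [Module R A] [AddCommGroup H] [Module R H]
  (hA : HopfQuasigroup R A) (hH : HopfQuasigroup R H)

open WithConv in
lemma conv_left_inv_eq_right_inv {f g k : A ⊗[R] H →ₗ[R] R}
    (hfg : conv hA hH f g = counitT hA hH) (hgk : conv hA hH g k = counitT hA hH) : f = k := by
  let := hA.toCoalgebra
  let := hH.toCoalgebra
  have toConv_conv (f g : A ⊗[R] H →ₗ[R] R) :
      toConv (conv hA hH f g) = toConv f * toConv g := rfl
  have toConv_counitT : toConv (counitT hA hH) = 1 := by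
    ext a h
    exact mul_comm (hA.counit a) (hH.counit h)
  apply toConv_injective
  apply left_inv_eq_right_inv (a := toConv g)
  · rw [← toConv_conv, hfg, toConv_counitT]
  · rw [← toConv_conv, hgk, toConv_counitT]

lemma conv_comp_map_comp_map (τ : A ⊗[R] H →ₗ[R] R) (f₁ f₂ : A →ₗ[R] A) (g₁ g₂ : H →ₗ[R] H) :
    conv hA hH (τ ∘ₗ map f₁ g₁) (τ ∘ₗ map f₂ g₂)
      = (TensorProduct.lid R R).toLinearMap ∘ₗ map τ τ
        ∘ₗ (TensorProduct.tensorTensorTensorComm R A A H H).toLinearMap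
        ∘ₗ map (map f₁ f₂ ∘ₗ hA.comul) (map g₁ g₂ ∘ₗ hH.comul) := by
  simp only [conv, comulT, TensorProduct.map_comp, LinearMap.comp_assoc]
  rw [← LinearMap.comp_assoc (map hA.comul hH.comul) (map (map f₁ f₂) (map g₁ g₂)),
    TensorProduct.tensorTensorTensorComm_comp_map, LinearMap.comp_assoc]

namespace IsSkewPairing

variable {hA hH} {τ : A ⊗[R] H →ₗ[R] R} (hτ : IsSkewPairing hA hH τ)
include hτ

lemma comp_rTensor_mul_comp (f : A →ₗ[R] A ⊗[R] A) :
    τ ∘ₗ (hA.mul ∘ₗ f).rTensor H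
      = (TensorProduct.lid R R).toLinearMap ∘ₗ map τ τ
        ∘ₗ (TensorProduct.tensorTensorTensorComm R A A H H).toLinearMap ∘ₗ map f hH.comul := by
  rw [LinearMap.rTensor_comp, ← LinearMap.comp_assoc, hτ.1]
  simp only [LinearMap.comp_assoc, LinearMap.lTensor_comp_rTensor]

lemma comp_map_mul_comp (f : A →ₗ[R] A) (g : H →ₗ[R] H ⊗[R] H) :
    τ ∘ₗ map f (hH.mul ∘ₗ g)
      = (TensorProduct.lid R R).toLinearMap ∘ₗ map τ τ
        ∘ₗ (TensorProduct.tensorTensorTensorComm R A A H H).toLinearMap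
        ∘ₗ map ((TensorProduct.comm R A A).toLinearMap ∘ₗ hA.comul ∘ₗ f) g := by
  rw [← LinearMap.lTensor_comp_map, ← LinearMap.comp_assoc, hτ.2.1]
  simp only [LinearMap.comp_assoc, LinearMap.rTensor_comp_map]

lemma comp_rTensor_unit_counit :
    τ ∘ₗ (toSpanSingleton R A hA.unit ∘ₗ hA.counit).rTensor H = counitT hA hH := by
  ext; simp [← TensorProduct.smul_tmul', hτ.2.2.2, counitT]

lemma conv_comp_rTensor_antipode :
    conv hA hH τ (τ ∘ₗ hA.antipode.rTensor H) = counitT hA hH := by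
  have h := conv_comp_map_comp_map hA hH τ LinearMap.id hA.antipode LinearMap.id LinearMap.id
  rw [TensorProduct.map_id, LinearMap.comp_id, TensorProduct.map_id, LinearMap.id_comp,
    ← hτ.comp_rTensor_mul_comp] at h
  rw [LinearMap.rTensor, h, ← LinearMap.lTensor, hA.mul_antipode_lTensor_comul,
    hτ.comp_rTensor_unit_counit]

lemma comp_rTensor_antipode_conv :
    conv hA hH (τ ∘ₗ hA.antipode.rTensor H) τ = counitT hA hH := by
  have h := conv_comp_map_comp_map hA hH τ hA.antipode LinearMap.id LinearMap.id LinearMap.id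
  rw [TensorProduct.map_id, LinearMap.comp_id, TensorProduct.map_id, LinearMap.id_comp,
    ← hτ.comp_rTensor_mul_comp] at h
  rw [LinearMap.rTensor, h, ← LinearMap.rTensor, hA.mul_antipode_rTensor_comul,
    hτ.comp_rTensor_unit_counit]

lemma comp_rTensor_antipode_conv_comp_map_antipode :
    conv hA hH (τ ∘ₗ hA.antipode.rTensor H) (τ ∘ₗ map hA.antipode hH.antipode)
      = counitT hA hH := by
  have h := conv_comp_map_comp_map hA hH τ hA.antipode hA.antipode LinearMap.id hH.antipode
  have hanti : map hA.antipode hA.antipode ∘ₗ hA.comul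
      = (TensorProduct.comm R A A).toLinearMap ∘ₗ hA.comul ∘ₗ hA.antipode := by
    rw [hA.comul_comp_antipode, TensorProduct.comm_comp_comm_assoc]
  rw [hanti, ← hτ.comp_map_mul_comp] at h
  rw [LinearMap.rTensor, h, ← LinearMap.lTensor, hH.mul_antipode_lTensor_comul]
  ext a h
  simpa [hτ.2.2.1, counitT, mul_comm] using congr(hH.counit h * $(hA.counit_comp_antipode) a)

end IsSkewPairing

end SkewPairing

theorem skewPairing_convolution_invertible {R : Type*} [CommRing R] {A H : Type*}
    [AddCommGroup A] [Module R A] [AddCommGroup H] [Module R H]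
    (hA : HopfQuasigroup R A) (hH : HopfQuasigroup R H) (τ : A ⊗[R] H →ₗ[R] R)
    (hτ : IsSkewPairing hA hH τ) :
    conv hA hH τ (τ ∘ₗ hA.antipode.rTensor H) = counitT hA hH ∧
    conv hA hH (τ ∘ₗ hA.antipode.rTensor H) τ = counitT hA hH ∧
    τ = (τ ∘ₗ hA.antipode.rTensor H) ∘ₗ hH.antipode.lTensor A := by
  refine ⟨hτ.conv_comp_rTensor_antipode, hτ.comp_rTensor_antipode_conv, ?_⟩
  rw [LinearMap.comp_assoc, LinearMap.rTensor_comp_lTensor]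
  exact conv_left_inv_eq_right_inv hA hH hτ.conv_comp_rTensor_antipode
    hτ.comp_rTensor_antipode_conv_comp_map_antipode
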